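/- Quadratic bound on the trace invariants at fixed points: if β^λ_{ijkl}(λ, y) = 0 for all i, j, k, l and β^y_i(y) = 0 for all i, then (a₀ + b₀) ε − (1/Ns)(((Ns + 8)/(Ns + 2)) a₀² + b₀²) − (2/Ns) a₀ b₀ + 12 Y ≥ 0. -/
import Mathlib


open Matrix

noncomputable section

/-- Entrywise complex conjugate of a matrix. -/
def mconj {Nf : ℕ} (A : Matrix (Fin Nf) (Fin Nf) ℂ) : Matrix (Fin Nf) (Fin Nf) ℂ :=
  A.map (starRingEnd ℂ)

/-- `Z_{ij} = Tr(y_i ȳ_j + ȳ_i y_j)` (a real number). -/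
def Zw {Ns Nf : ℕ} (y : Fin Ns → Matrix (Fin Nf) (Fin Nf) ℂ) (i j : Fin Ns) : ℝ :=
  (Matrix.trace (y i * mconj (y j) + mconj (y i) * y j)).re

/-- `X_{ijkl} = (1/4) Σ_σ Tr(y_{σ(i)} ȳ_{σ(j)} y_{σ(k)} ȳ_{σ(l)})`,
summing over all 24 permutations of the index list `(i,j,k,l)`. -/
def Xw {Ns Nf : ℕ} (y : Fin Ns → Matrix (Fin Nf) (Fin Nf) ℂ) (i j k l : Fin Ns) : ℝ :=
  (1 / 4) * (∑ σ : Equiv.Perm (Fin 4),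
    Matrix.trace (y (![i, j, k, l] (σ 0)) * mconj (y (![i, j, k, l] (σ 1))) *
      (y (![i, j, k, l] (σ 2)) * mconj (y (![i, j, k, l] (σ 3)))))).re

/-- Full permutation symmetry of the quartic coupling tensor. -/
def FullySymm {Ns : ℕ} (lam : Fin Ns → Fin Ns → Fin Ns → Fin Ns → ℝ) : Prop :=
  ∀ i j k l, lam i j k l = lam j i k l ∧ lam i j k l = lam i k j l ∧
    lam i j k l = lam i j l k

/-- One-loop quartic beta function for Weyl fermions (α = 2). -/
def betaLamW {Ns Nf : ℕ} (ε : ℝ) (lam : Fin Ns → Fin Ns → Fin Ns → Fin Ns → ℝ)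
    (y : Fin Ns → Matrix (Fin Nf) (Fin Nf) ℂ) (i j k l : Fin Ns) : ℝ :=
  -ε * lam i j k l
    + ∑ m, ∑ n, (lam i j m n * lam m n k l + lam i k m n * lam m n j l
        + lam i l m n * lam m n j k)
    - 4 * Xw y i j k l
    + (1 / 2) * ∑ m, (Zw y i m * lam m j k l + Zw y j m * lam i m k l
        + Zw y k m * lam i j m l + Zw y l m * lam i j k m)

/-- One-loop Yukawa beta function for Weyl fermions (α = 2). -/
def betaYW {Ns Nf : ℕ} (ε : ℝ) (y : Fin Ns → Matrix (Fin Nf) (Fin Nf) ℂ) (i : Fin Ns) :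
    Matrix (Fin Nf) (Fin Nf) ℂ :=
  (-(1 / 2) * (ε : ℂ)) • y i
    + (1 / 2 : ℂ) • ∑ j, (y j * mconj (y j) * y i + y i * mconj (y j) * y j
        + (4 : ℂ) • (y j * mconj (y i) * y j))
    + (1 / 2 : ℂ) • ∑ j, ((Zw y i j : ℂ) • y j)

/-- `a₀ = λ_{iijj}`. -/
def a0inv {Ns : ℕ} (lam : Fin Ns → Fin Ns → Fin Ns → Fin Ns → ℝ) : ℝ :=
  ∑ i, ∑ j, lam i i j j

/-- `a₁ = λ_{iimn} λ_{jjmn}`. -/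
def a1inv {Ns : ℕ} (lam : Fin Ns → Fin Ns → Fin Ns → Fin Ns → ℝ) : ℝ :=
  ∑ m, ∑ n, (∑ i, lam i i m n) * (∑ j, lam j j m n)

/-- `S = λ_{ijkl} λ_{ijkl} = ‖λ‖²`. -/
def Sinv {Ns : ℕ} (lam : Fin Ns → Fin Ns → Fin Ns → Fin Ns → ℝ) : ℝ :=
  ∑ i, ∑ j, ∑ k, ∑ l, lam i j k l ^ 2

/-- `b₀ = Z_{ii}`. -/
def b0inv {Ns Nf : ℕ} (y : Fin Ns → Matrix (Fin Nf) (Fin Nf) ℂ) : ℝ :=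
  ∑ i, Zw y i i

/-- `b₁ = Z_{ij} Z_{ij} − b₀²/Ns`. -/
def b1inv {Ns Nf : ℕ} (y : Fin Ns → Matrix (Fin Nf) (Fin Nf) ℂ) : ℝ :=
  (∑ i, ∑ j, Zw y i j ^ 2) - b0inv y ^ 2 / (Ns : ℝ)

/-- `b₂ = Σ_{i,j} (λ_{ijkk} − (a₀/Ns) δ_{ij} + Z_{ij} − (b₀/Ns) δ_{ij})²`. -/
def b2inv {Ns Nf : ℕ} (lam : Fin Ns → Fin Ns → Fin Ns → Fin Ns → ℝ)
    (y : Fin Ns → Matrix (Fin Nf) (Fin Nf) ℂ) : ℝ :=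
  ∑ i, ∑ j, ((∑ k, lam i j k k) - (a0inv lam / (Ns : ℝ)) * (if i = j then 1 else 0)
      + Zw y i j - (b0inv y / (Ns : ℝ)) * (if i = j then 1 else 0)) ^ 2

/-- `b₃ = X_{iijj}`. -/
def b3inv {Ns Nf : ℕ} (y : Fin Ns → Matrix (Fin Nf) (Fin Nf) ℂ) : ℝ :=
  ∑ i, ∑ j, Xw y i i j j

/-- `Y = Tr(y_i ȳ_i y_j ȳ_j) = ‖y_i ȳ_i‖²`. -/
def Yinv {Ns Nf : ℕ} (y : Fin Ns → Matrix (Fin Nf) (Fin Nf) ℂ) : ℝ :=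
  (∑ i, ∑ j, Matrix.trace (y i * mconj (y i) * (y j * mconj (y j)))).re

/-- `b̃₀ = a₀ b₀ / Ns`. -/
def btilde0 {Ns Nf : ℕ} (lam : Fin Ns → Fin Ns → Fin Ns → Fin Ns → ℝ)
    (y : Fin Ns → Matrix (Fin Nf) (Fin Nf) ℂ) : ℝ :=
  a0inv lam * b0inv y / (Ns : ℝ)

/-- The `A`-function `A_y(λ)` generating the one-loop quartic beta function. -/
def Afun {Ns Nf : ℕ} (ε : ℝ) (lam : Fin Ns → Fin Ns → Fin Ns → Fin Ns → ℝ)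
    (y : Fin Ns → Matrix (Fin Nf) (Fin Nf) ℂ) : ℝ :=
  -(1 / 2) * ε * (∑ i, ∑ j, ∑ k, ∑ l, lam i j k l * lam i j k l)
    + (∑ i, ∑ j, ∑ k, ∑ l, ∑ m, ∑ n, lam i j k l * lam k l m n * lam m n i j)
    - 4 * (∑ i, ∑ j, ∑ k, ∑ l, Xw y i j k l * lam i j k l)
    + (∑ i, ∑ j, ∑ k, ∑ l, ∑ m, Zw y i j * lam i k l m * lam j k l m)


/-! ### Auxiliary lemmas -/

section Aux

variable {Ns Nf : ℕ} {M : Type*} [AddCommMonoid M]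

lemma mconj_mul (A B : Matrix (Fin Nf) (Fin Nf) ℂ) : mconj (A * B) = mconj A * mconj B := by
  simp [mconj, Matrix.map_mul]

lemma mconj_mconj (A : Matrix (Fin Nf) (Fin Nf) ℂ) : mconj (mconj A) = A := by
  ext i j
  simp [mconj, Matrix.map_apply]

lemma trace_mconj (A : Matrix (Fin Nf) (Fin Nf) ℂ) :
    Matrix.trace (mconj A) = (starRingEnd ℂ) (Matrix.trace A) := by
  simp [mconj, Matrix.trace, Matrix.diag, map_sum]

/-- real part of `Tr(y_a ȳ_b y_c ȳ_d)`. -/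
def t4 (y : Fin Ns → Matrix (Fin Nf) (Fin Nf) ℂ) (a b c d : Fin Ns) : ℝ :=
  (Matrix.trace (y a * mconj (y b) * (y c * mconj (y d)))).re

/-- real part of `Tr(y_a ȳ_b)`. -/
def t2 (y : Fin Ns → Matrix (Fin Nf) (Fin Nf) ℂ) (a b : Fin Ns) : ℝ :=
  (Matrix.trace (y a * mconj (y b))).re

lemma t4_def2 (y : Fin Ns → Matrix (Fin Nf) (Fin Nf) ℂ) (a b c d : Fin Ns) :
    (Matrix.trace (y a * mconj (y b) * y c * mconj (y d))).re = t4 y a b c d := by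
  unfold t4; rw [Matrix.mul_assoc (y a * mconj (y b))]

lemma t2_def (y : Fin Ns → Matrix (Fin Nf) (Fin Nf) ℂ) (a b : Fin Ns) :
    (Matrix.trace (y a * mconj (y b))).re = t2 y a b := rfl

lemma t4_cyc (y : Fin Ns → Matrix (Fin Nf) (Fin Nf) ℂ) (a b c d : Fin Ns) :
    t4 y a b c d = t4 y c d a b := by
  unfold t4
  rw [trace_mul_comm]

lemma t4_rot (y : Fin Ns → Matrix (Fin Nf) (Fin Nf) ℂ) (a b c d : Fin Ns) :
    t4 y a b c d = t4 y b c d a := by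
  unfold t4
  have h : Matrix.trace (y a * mconj (y b) * (y c * mconj (y d)))
      = (starRingEnd ℂ) (Matrix.trace (y b * mconj (y c) * (y d * mconj (y a)))) := by
    rw [← trace_mconj]
    simp only [mconj_mul, mconj_mconj, Matrix.mul_assoc]
    rw [trace_mul_comm (y a)]
    simp only [Matrix.mul_assoc]
  rw [h, Complex.conj_re]

lemma t2_symm (y : Fin Ns → Matrix (Fin Nf) (Fin Nf) ℂ) (a b : Fin Ns) :
    t2 y a b = t2 y b a := by
  unfold t2
  have h : Matrix.trace (y a * mconj (y b))
      = (starRingEnd ℂ) (Matrix.trace (y b * mconj (y a))) := by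
    rw [← trace_mconj]
    simp only [mconj_mul, mconj_mconj]
    rw [trace_mul_comm]
  rw [h, Complex.conj_re]

lemma Zw_eq (y : Fin Ns → Matrix (Fin Nf) (Fin Nf) ℂ) (i j : Fin Ns) :
    Zw y i j = 2 * t2 y i j := by
  unfold Zw t2
  rw [Matrix.trace_add, Complex.add_re]
  have h : Matrix.trace (mconj (y i) * y j)
      = (starRingEnd ℂ) (Matrix.trace (y i * mconj (y j))) := by
    rw [← trace_mconj, mconj_mul, mconj_mconj]
  rw [h, Complex.conj_re]
  ring

lemma Zw_symm (y : Fin Ns → Matrix (Fin Nf) (Fin Nf) ℂ) (i j : Fin Ns) :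
    Zw y i j = Zw y j i := by
  rw [Zw_eq, Zw_eq, t2_symm]

lemma Yinv_eq (y : Fin Ns → Matrix (Fin Nf) (Fin Nf) ℂ) :
    Yinv y = ∑ i, ∑ j, t4 y i i j j := by
  unfold Yinv t4
  rw [Complex.re_sum]
  exact Finset.sum_congr rfl fun i _ => Complex.re_sum _ _

lemma permL1 (g : Fin 1 → M) : ∑ τ : Equiv.Perm (Fin 1), g (τ 0) = g 0 := by
  simp [Fin.eq_zero]

lemma permL2 (g : Fin 2 → Fin 2 → M) :
    ∑ τ : Equiv.Perm (Fin 2), g (τ 0) (τ 1) = g 0 1 + g 1 0 := by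
  rw [← Equiv.sum_comp (Equiv.Perm.decomposeFin).symm
    (fun τ => g (τ 0) (τ 1)), Fintype.sum_prod_type]
  rw [Fin.sum_univ_two]
  rw [Finset.univ_unique, Finset.sum_singleton, Finset.sum_singleton]
  simp only [show ∀ p : Fin 2, ∀ e : Equiv.Perm (Fin 1), ∀ k : Fin 2,
    (Equiv.Perm.decomposeFin.symm (p, e)) k
      = if k = 0 then p else (if p = 0 then 1 else 0) from by decide]
  norm_num

lemma permL3 (g : Fin 3 → Fin 3 → Fin 3 → M) :
    ∑ τ : Equiv.Perm (Fin 3), g (τ 0) (τ 1) (τ 2) =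
      g 0 1 2 + g 0 2 1 + (g 1 0 2 + g 1 2 0) + (g 2 0 1 + g 2 1 0) := by
  rw [← Equiv.sum_comp (Equiv.Perm.decomposeFin).symm
    (fun τ => g (τ 0) (τ 1) (τ 2)), Fintype.sum_prod_type]
  rw [Fin.sum_univ_three]
  simp only [show (1:Fin 3) = (0:Fin 2).succ from rfl, show (2:Fin 3) = (1:Fin 2).succ from rfl,
    Equiv.Perm.decomposeFin_symm_apply_zero, Equiv.Perm.decomposeFin_symm_apply_succ]
  rw [permL2 (fun u v => g 0 (Equiv.swap 0 0 u.succ) (Equiv.swap 0 0 v.succ)),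
      permL2 (fun u v => g ((0:Fin 2).succ) (Equiv.swap 0 ((0:Fin 2).succ) u.succ) (Equiv.swap 0 ((0:Fin 2).succ) v.succ)),
      permL2 (fun u v => g ((1:Fin 2).succ) (Equiv.swap 0 ((1:Fin 2).succ) u.succ) (Equiv.swap 0 ((1:Fin 2).succ) v.succ))]
  simp only [show ∀ p k : Fin 3, Equiv.swap 0 p k =
    if k = 0 then p else if k = p then 0 else k from by decide,
    show ((0:Fin 2).succ : Fin 3) = 1 from rfl, show ((1:Fin 2).succ : Fin 3) = 2 from rfl]
  simp
  abel

lemma permL4 (g : Fin 4 → Fin 4 → Fin 4 → Fin 4 → M) :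
    ∑ τ : Equiv.Perm (Fin 4), g (τ 0) (τ 1) (τ 2) (τ 3) =
      (g 0 1 2 3 + g 0 1 3 2 + (g 0 2 1 3 + g 0 2 3 1) + (g 0 3 1 2 + g 0 3 2 1))
      + (g 1 0 2 3 + g 1 0 3 2 + (g 1 2 0 3 + g 1 2 3 0) + (g 1 3 0 2 + g 1 3 2 0))
      + (g 2 0 1 3 + g 2 0 3 1 + (g 2 1 0 3 + g 2 1 3 0) + (g 2 3 0 1 + g 2 3 1 0))
      + (g 3 0 1 2 + g 3 0 2 1 + (g 3 1 0 2 + g 3 1 2 0) + (g 3 2 0 1 + g 3 2 1 0)) := by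
  rw [← Equiv.sum_comp (Equiv.Perm.decomposeFin).symm
    (fun τ => g (τ 0) (τ 1) (τ 2) (τ 3)), Fintype.sum_prod_type]
  rw [Fin.sum_univ_four]
  simp only [show (1:Fin 4) = (0:Fin 3).succ from rfl, show (2:Fin 4) = (1:Fin 3).succ from rfl,
    show (3:Fin 4) = (2:Fin 3).succ from rfl,
    Equiv.Perm.decomposeFin_symm_apply_zero, Equiv.Perm.decomposeFin_symm_apply_succ]
  rw [permL3 (fun u v w => g 0 (Equiv.swap 0 0 u.succ) (Equiv.swap 0 0 v.succ) (Equiv.swap 0 0 w.succ)),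
      permL3 (fun u v w => g ((0:Fin 3).succ) (Equiv.swap 0 ((0:Fin 3).succ) u.succ) (Equiv.swap 0 ((0:Fin 3).succ) v.succ) (Equiv.swap 0 ((0:Fin 3).succ) w.succ)),
      permL3 (fun u v w => g ((1:Fin 3).succ) (Equiv.swap 0 ((1:Fin 3).succ) u.succ) (Equiv.swap 0 ((1:Fin 3).succ) v.succ) (Equiv.swap 0 ((1:Fin 3).succ) w.succ)),
      permL3 (fun u v w => g ((2:Fin 3).succ) (Equiv.swap 0 ((2:Fin 3).succ) u.succ) (Equiv.swap 0 ((2:Fin 3).succ) v.succ) (Equiv.swap 0 ((2:Fin 3).succ) w.succ))]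
  simp only [show ∀ p k : Fin 4, Equiv.swap 0 p k =
    if k = 0 then p else if k = p then 0 else k from by decide,
    show ((0:Fin 3).succ : Fin 4) = 1 from rfl, show ((1:Fin 3).succ : Fin 4) = 2 from rfl,
    show ((2:Fin 3).succ : Fin 4) = 3 from rfl]
  simp
  abel

lemma Xw_iijj (y : Fin Ns → Matrix (Fin Nf) (Fin Nf) ℂ) (i j : Fin Ns) :
    Xw y i i j j = 4 * t4 y i i j j + 2 * t4 y i j i j := by
  unfold Xw
  rw [permL4 (fun a b c d => Matrix.trace (y (![i,i,j,j] a) * mconj (y (![i,i,j,j] b)) *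
    (y (![i,i,j,j] c) * mconj (y (![i,i,j,j] d)))))]
  simp only [show (![i,i,j,j] : Fin 4 → Fin Ns) 0 = i from rfl,
    show (![i,i,j,j] : Fin 4 → Fin Ns) 1 = i from rfl,
    show (![i,i,j,j] : Fin 4 → Fin Ns) 2 = j from rfl,
    show (![i,i,j,j] : Fin 4 → Fin Ns) 3 = j from rfl]
  simp only [Complex.add_re, show ∀ a b c d : Fin Ns,
    (Matrix.trace (y a * mconj (y b) * (y c * mconj (y d)))).re = t4 y a b c d
    from fun a b c d => rfl]
  have e1 : t4 y i j j i = t4 y i i j j := by rw [t4_rot, t4_cyc]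
  have e2 : t4 y j j i i = t4 y i i j j := by rw [t4_cyc]
  have e3 : t4 y j i i j = t4 y i i j j := by rw [t4_rot]
  have e4 : t4 y j i j i = t4 y i j i j := by rw [t4_rot]
  rw [e1, e2, e3, e4]
  ring

lemma betaY_trace_re (ε : ℝ) (y : Fin Ns → Matrix (Fin Nf) (Fin Nf) ℂ) (i : Fin Ns) :
    (Matrix.trace (betaYW ε y i * mconj (y i))).re =
      -(1/2)*ε*t2 y i i
      + (1/2) * ∑ j, (t4 y j j i i + t4 y i j j i + 4 * t4 y j i j i)
      + (1/2) * ∑ j, Zw y i j * t2 y j i := by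
  unfold betaYW
  simp only [Matrix.add_mul, Matrix.smul_mul, Matrix.sum_mul, Matrix.trace_add,
    Matrix.trace_smul, Matrix.trace_sum, smul_eq_mul, Complex.add_re]
  rw [show (-(1/2) * (ε:ℂ)) = ((-(1/2)*ε : ℝ) : ℂ) by push_cast; ring,
      show (1/2 : ℂ) = ((1/2 : ℝ) : ℂ) by norm_num]
  simp only [Complex.re_ofReal_mul, Complex.re_sum, Complex.add_re, t4_def2, t2_def,
    show ((4:ℂ)) = ((4:ℝ):ℂ) by norm_num]
  try simp only [Complex.re_ofReal_mul]
  try ring_nf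

lemma yuk_identity (ε : ℝ) (y : Fin Ns → Matrix (Fin Nf) (Fin Nf) ℂ)
    (hfpy : ∀ i, betaYW ε y i = 0) :
    ε * (∑ i, Zw y i i) = 4 * (∑ i, ∑ j, t4 y i i j j) + 8 * (∑ i, ∑ j, t4 y i j i j)
      + ∑ i, ∑ j, (Zw y i j)^2 := by
  have H : (0:ℝ) = ∑ i, (-(1/2)*ε*t2 y i i
      + (1/2) * ∑ j, (t4 y j j i i + t4 y i j j i + 4 * t4 y j i j i)
      + (1/2) * ∑ j, Zw y i j * t2 y j i) := by
    rw [Finset.sum_congr rfl (fun i _ => (betaY_trace_re ε y i).symm)]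
    simp [hfpy]
  have Hp : ∀ i : Fin Ns, (-(1/2)*ε*t2 y i i
      + (1/2) * ∑ j, (t4 y j j i i + t4 y i j j i + 4 * t4 y j i j i)
      + (1/2) * ∑ j, Zw y i j * t2 y j i)
      = -(ε/4) * Zw y i i
        + ∑ j, ((t4 y i i j j + 2 * t4 y i j i j) + (1/4) * (Zw y i j)^2) := by
    intro i
    have e0 : t2 y i i = Zw y i i / 2 := by rw [Zw_eq]; ring
    have e1 : ∀ j, t4 y j j i i = t4 y i i j j := fun j => t4_cyc y j j i i
    have e2 : ∀ j, t4 y i j j i = t4 y i i j j := fun j => by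
      rw [t4_rot y i j j i, t4_cyc y j j i i]
    have e3 : ∀ j, t4 y j i j i = t4 y i j i j := fun j => t4_rot y j i j i
    have e4 : ∀ j : Fin Ns, Zw y i j * t2 y j i = (1/2) * (Zw y i j)^2 := fun j => by
      rw [show t2 y j i = Zw y j i / 2 by rw [Zw_eq]; ring, Zw_symm y j i]; ring
    rw [e0, Finset.sum_congr rfl (fun j _ => by rw [e1 j, e2 j, e3 j]),
        Finset.sum_congr rfl (fun j _ => e4 j)]
    rw [Finset.mul_sum, Finset.mul_sum]
    have hpt : ∀ j ∈ (Finset.univ : Finset (Fin Ns)),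
        (t4 y i i j j + 2 * t4 y i j i j) + (1/4) * (Zw y i j)^2
        = (1/2) * (t4 y i i j j + t4 y i i j j + 4 * t4 y i j i j)
          + (1/2) * ((1/2) * (Zw y i j)^2) := fun j _ => by ring
    rw [Finset.sum_congr rfl hpt, Finset.sum_add_distrib]
    ring
  rw [Finset.sum_congr rfl (fun i _ => Hp i)] at H
  rw [Finset.sum_add_distrib] at H
  simp only [← Finset.mul_sum, Finset.sum_add_distrib] at H
  nlinarith [H]

lemma comm4 (f : Fin Ns → Fin Ns → Fin Ns → Fin Ns → ℝ) :
    ∑ i, ∑ j, ∑ m, ∑ n, f i j m n = ∑ m, ∑ n, ∑ i, ∑ j, f i j m n := by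
  have s1 : ∀ i, ∑ j, ∑ m, ∑ n, f i j m n = ∑ m, ∑ n, ∑ j, f i j m n := by
    intro i
    rw [Finset.sum_comm]
    exact Finset.sum_congr rfl fun m _ => Finset.sum_comm
  rw [Finset.sum_congr rfl fun i _ => s1 i, Finset.sum_comm]
  exact Finset.sum_congr rfl fun m _ => Finset.sum_comm

lemma comm_jm (f : Fin Ns → Fin Ns → Fin Ns → ℝ) :
    ∑ i, ∑ j, ∑ m, f i j m = ∑ i, ∑ m, ∑ j, f i j m :=
  Finset.sum_congr rfl fun _ _ => Finset.sum_comm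

section LamSymm
variable (lam : Fin Ns → Fin Ns → Fin Ns → Fin Ns → ℝ) (hsym : FullySymm lam)
include hsym

lemma lam_pair (i j k l : Fin Ns) : lam i j k l = lam k l i j := by
  rw [(hsym i j k l).2.1, (hsym i k j l).1, (hsym k i j l).2.2, (hsym k i l j).2.1]

lemma lam_q1 (i j m n : Fin Ns) :
    lam i i m n * lam m n j j + lam i j m n * lam m n i j + lam i j m n * lam m n i j
      = lam i i m n * lam j j m n + 2 * (lam i j m n)^2 := by
  rw [lam_pair lam hsym m n j j, lam_pair lam hsym m n i j]; ring

lemma lam_z1 (m i j : Fin Ns) : lam m i j j = lam i m j j := (hsym m i j j).1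
lemma lam_z2 (i m j : Fin Ns) : lam i i m j = lam j m i i := by
  rw [lam_pair lam hsym i i m j, (hsym m j i i).1]
lemma lam_z3 (i m j : Fin Ns) : lam i i j m = lam j m i i := by
  rw [(hsym i i j m).2.2, lam_z2 lam hsym i m j]

lemma quartic_identity (ε : ℝ) (Z X : Fin Ns → Fin Ns → ℝ)
    (hfp : ∀ i j, -ε * lam i i j j
      + (∑ m, ∑ n, (lam i i m n * lam m n j j + lam i j m n * lam m n i j
          + lam i j m n * lam m n i j))
      - 4 * X i j
      + (1/2) * ∑ m, (Z i m * lam m i j j + Z i m * lam i m j j + Z j m * lam i i m j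
          + Z j m * lam i i j m) = 0) :
    ε * (∑ i, ∑ j, lam i i j j)
      = (∑ m, ∑ n, (∑ i, lam i i m n) * (∑ j, lam j j m n))
        + 2 * (∑ i, ∑ j, ∑ m, ∑ n, (lam i j m n)^2)
        - 4 * (∑ i, ∑ j, X i j)
        + 2 * (∑ i, ∑ m, Z i m * (∑ j, lam i m j j)) := by
  have hpt : ∀ i j : Fin Ns, (-ε * lam i i j j
      + (∑ m, ∑ n, (lam i i m n * lam m n j j + lam i j m n * lam m n i j
          + lam i j m n * lam m n i j))
      - 4 * X i j
      + (1/2) * ∑ m, (Z i m * lam m i j j + Z i m * lam i m j j + Z j m * lam i i m j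
          + Z j m * lam i i j m))
      = -ε * lam i i j j + ((∑ m, ∑ n, lam i i m n * lam j j m n)
          + 2 * (∑ m, ∑ n, (lam i j m n)^2))
        - 4 * X i j
        + ((∑ m, Z i m * lam i m j j) + (∑ m, Z j m * lam j m i i)) := by
    intro i j
    rw [Finset.sum_congr rfl (fun m (_ : m ∈ Finset.univ) =>
      Finset.sum_congr rfl fun n _ => lam_q1 lam hsym i j m n)]
    rw [Finset.sum_congr rfl (fun m (_ : m ∈ Finset.univ) =>
      show Z i m * lam m i j j + Z i m * lam i m j j + Z j m * lam i i m j
          + Z j m * lam i i j m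
        = 2 * (Z i m * lam i m j j) + 2 * (Z j m * lam j m i i) from by
        rw [lam_z1 lam hsym m i j, lam_z2 lam hsym i m j, lam_z3 lam hsym i m j]; ring)]
    rw [Finset.sum_congr rfl (fun m (_ : m ∈ Finset.univ) =>
      Finset.sum_add_distrib (f := fun n => lam i i m n * lam j j m n)
        (g := fun n => 2 * (lam i j m n)^2)), Finset.sum_add_distrib]
    rw [Finset.sum_add_distrib (f := fun m => 2 * (Z i m * lam i m j j))
        (g := fun m => 2 * (Z j m * lam j m i i))]
    simp only [← Finset.mul_sum]
    ring
  have H : (0:ℝ) = ∑ i, ∑ j, (-ε * lam i i j j + ((∑ m, ∑ n, lam i i m n * lam j j m n)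
          + 2 * (∑ m, ∑ n, (lam i j m n)^2))
        - 4 * X i j
        + ((∑ m, Z i m * lam i m j j) + (∑ m, Z j m * lam j m i i))) := by
    symm
    apply Finset.sum_eq_zero; intro i _
    apply Finset.sum_eq_zero; intro j _
    rw [← hpt i j]; exact hfp i j
  simp only [Finset.sum_add_distrib, Finset.sum_sub_distrib, ← Finset.mul_sum] at H
  have r1 : ∑ i, ∑ j, ∑ m, ∑ n, lam i i m n * lam j j m n
      = ∑ m, ∑ n, (∑ i, lam i i m n) * (∑ j, lam j j m n) := by
    rw [comm4 (fun i j m n => lam i i m n * lam j j m n)]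
    exact Finset.sum_congr rfl fun m _ => Finset.sum_congr rfl fun n _ =>
      (Finset.sum_mul_sum _ _ _ _).symm
  have r2 : ∑ i, ∑ j, ∑ m, Z i m * lam i m j j
      = ∑ i, ∑ m, Z i m * (∑ j, lam i m j j) := by
    rw [comm_jm (fun i j m => Z i m * lam i m j j)]
    exact Finset.sum_congr rfl fun i _ => Finset.sum_congr rfl fun m _ =>
      (Finset.mul_sum _ _ _).symm
  have r3 : ∑ i, ∑ j, ∑ m, Z j m * lam j m i i
      = ∑ i, ∑ m, Z i m * (∑ j, lam i m j j) := by
    rw [Finset.sum_comm]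
    rw [comm_jm (fun j i m => Z j m * lam j m i i)]
    exact Finset.sum_congr rfl fun j _ => Finset.sum_congr rfl fun m _ =>
      (Finset.mul_sum _ _ _).symm
  rw [r1, r2, r3] at H
  linarith [H]

end LamSymm

/-- Kronecker delta. -/
def dl {Ns : ℕ} (i j : Fin Ns) : ℝ := if i = j then 1 else 0

lemma sum_dl_mul (f : Fin Ns → ℝ) (i : Fin Ns) : ∑ j, dl i j * f j = f i := by
  simp [dl, Finset.sum_ite_eq, Finset.mem_univ]

lemma sq_delta_expand (Mf : Fin Ns → Fin Ns → ℝ) (c : ℝ) :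
    ∑ i, ∑ j, (Mf i j - c * dl i j)^2
      = (∑ i, ∑ j, (Mf i j)^2) - 2*c*(∑ i, Mf i i) + c^2 * Ns := by
  have hpt : ∀ i j : Fin Ns, (Mf i j - c * dl i j)^2
      = (Mf i j)^2 - 2*c*(dl i j * Mf i j) + c^2 * dl i j := by
    intro i j; by_cases h : i = j <;> simp [dl, h] <;> ring
  rw [Finset.sum_congr rfl fun i _ => Finset.sum_congr rfl fun j _ => hpt i j]
  have h1 : ∀ i : Fin Ns, ∑ j, ((Mf i j)^2 - 2*c*(dl i j * Mf i j) + c^2 * dl i j)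
      = (∑ j, (Mf i j)^2) - 2*c*(Mf i i) + c^2 * dl i i := by
    intro i
    rw [Finset.sum_add_distrib, Finset.sum_sub_distrib, ← Finset.mul_sum, ← Finset.mul_sum,
      sum_dl_mul (fun j => Mf i j) i]
    congr 1
    simp [dl]
  rw [Finset.sum_congr rfl fun i _ => h1 i]
  rw [Finset.sum_add_distrib, Finset.sum_sub_distrib, ← Finset.mul_sum]
  simp [dl, Finset.sum_const, mul_comm]

lemma delta_T_norm :
    ∑ i : Fin Ns, ∑ j : Fin Ns, ∑ k : Fin Ns, ∑ l : Fin Ns,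
      (dl i j * dl k l + dl i k * dl j l + dl i l * dl j k)^2
      = 3 * (Ns:ℝ)^2 + 6 * Ns := by
  simp [pow_two, dl, add_mul, mul_add, mul_ite, ite_mul, mul_one, mul_zero, zero_mul,
    one_mul, Finset.sum_add_distrib, Finset.sum_ite_eq, Finset.sum_ite_eq', Finset.mem_univ,
    Finset.sum_const, Finset.card_univ]
  ring

lemma lam_dot_T (lam : Fin Ns → Fin Ns → Fin Ns → Fin Ns → ℝ) (hsym : FullySymm lam) :
    ∑ i, ∑ j, ∑ k, ∑ l, lam i j k l * (dl i j * dl k l + dl i k * dl j l + dl i l * dl j k)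
      = 3 * (∑ i, ∑ j, lam i i j j) := by
  have e1 : ∀ i j : Fin Ns, lam i j i j = lam i i j j := fun i j => (hsym i j i j).2.1
  simp [dl, add_mul, mul_add, mul_ite, ite_mul, mul_one, mul_zero, zero_mul,
    one_mul, Finset.sum_add_distrib, Finset.sum_ite_eq, Finset.sum_ite_eq', Finset.mem_univ]
  have e2 : ∀ i j : Fin Ns, lam i j j i = lam i i j j := fun i j => by
    rw [(hsym i j j i).2.2, (hsym i j i j).2.1]
  rw [Finset.sum_congr rfl fun i _ => Finset.sum_congr rfl fun j _ => e1 i j,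
      Finset.sum_congr rfl fun i _ => Finset.sum_congr rfl fun j _ => e2 i j]
  ring

lemma cs_final (lam : Fin Ns → Fin Ns → Fin Ns → Fin Ns → ℝ) (hsym : FullySymm lam) :
    9 * (∑ i, ∑ j, lam i i j j)^2
      ≤ (∑ i, ∑ j, ∑ k, ∑ l, (lam i j k l)^2) * (3*(Ns:ℝ)^2 + 6*Ns) := by
  have cs := Finset.sum_mul_sq_le_sq_mul_sq
    (Finset.univ : Finset (Fin Ns × Fin Ns × Fin Ns × Fin Ns))
    (fun p => lam p.1 p.2.1 p.2.2.1 p.2.2.2)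
    (fun p => dl p.1 p.2.1 * dl p.2.2.1 p.2.2.2 + dl p.1 p.2.2.1 * dl p.2.1 p.2.2.2
      + dl p.1 p.2.2.2 * dl p.2.1 p.2.2.1)
  simp only [Fintype.sum_prod_type] at cs
  rw [lam_dot_T lam hsym, delta_T_norm] at cs
  nlinarith [cs]

end Aux

/-- Quadratic bound on the trace invariants at fixed points:
`(a₀ + b₀) ε − (1/Ns)(((Ns+8)/(Ns+2)) a₀² + b₀²) − (2/Ns) a₀ b₀ + 12 Y ≥ 0`. -/
theorem trace_invariant_bound {Ns Nf : ℕ} (hNs : 1 ≤ Ns) (hNf : 1 ≤ Nf)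
    (ε : ℝ) (lam : Fin Ns → Fin Ns → Fin Ns → Fin Ns → ℝ)
    (y : Fin Ns → Matrix (Fin Nf) (Fin Nf) ℂ)
    (hsym : FullySymm lam) (hy : ∀ i, (y i)ᵀ = y i)
    (hfpl : ∀ i j k l, betaLamW ε lam y i j k l = 0)
    (hfpy : ∀ i, betaYW ε y i = 0) :
    0 ≤ (a0inv lam + b0inv y) * ε
        - (1 / (Ns : ℝ)) * ((((Ns : ℝ) + 8) / ((Ns : ℝ) + 2)) * a0inv lam ^ 2
            + b0inv y ^ 2)
        - (2 / (Ns : ℝ)) * (a0inv lam * b0inv y) + 12 * Yinv y := by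
  have pair : ∀ i j k l, lam i j k l = lam k l i j := lam_pair lam hsym
  have E2 := yuk_identity ε y hfpy
  have E1 := quartic_identity lam hsym ε (Zw y) (fun i j => Xw y i i j j)
    (fun i j => hfpl i i j j)
  have EXs : (∑ i, ∑ j, Xw y i i j j)
      = 4*(∑ i, ∑ j, t4 y i i j j) + 2*(∑ i, ∑ j, t4 y i j i j) := by
    rw [Finset.sum_congr rfl fun i _ => Finset.sum_congr rfl fun j _ => Xw_iijj y i j]
    simp only [Finset.sum_add_distrib, ← Finset.mul_sum]
  rw [EXs] at E1
  have hL : ∀ m n : Fin Ns, (∑ i, lam i i m n) = (∑ k, lam m n k k) := fun m n =>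
    Finset.sum_congr rfl fun k _ => pair k k m n
  have ha1 : (∑ m, ∑ n, (∑ i, lam i i m n) * (∑ j, lam j j m n))
      = ∑ m, ∑ n, (∑ k, lam m n k k)^2 :=
    Finset.sum_congr rfl fun m _ => Finset.sum_congr rfl fun n _ => by rw [hL m n]; ring
  rw [ha1] at E1
  have hN1 : (1:ℝ) ≤ (Ns:ℝ) := by exact_mod_cast hNs
  have hN0 : (0:ℝ) < (Ns:ℝ) := by linarith
  have hN2 : (0:ℝ) < (Ns:ℝ) + 2 := by linarith
  have hb2 : b2inv lam y = (∑ i, ∑ j, ((∑ k, lam i j k k) + Zw y i j)^2)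
      - 2*(a0inv lam / (Ns:ℝ) + b0inv y / (Ns:ℝ))*(a0inv lam + b0inv y)
      + (a0inv lam / (Ns:ℝ) + b0inv y / (Ns:ℝ))^2 * Ns := by
    unfold b2inv
    rw [Finset.sum_congr rfl fun i _ => Finset.sum_congr rfl fun j _ => (show
      ((∑ k, lam i j k k) - (a0inv lam / (Ns:ℝ)) * (if i = j then (1:ℝ) else 0) + Zw y i j
        - (b0inv y / (Ns:ℝ)) * (if i = j then (1:ℝ) else 0))^2
      = (((∑ k, lam i j k k) + Zw y i j)
          - (a0inv lam / (Ns:ℝ) + b0inv y / (Ns:ℝ)) * dl i j)^2 from by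
        unfold dl; ring)]
    rw [sq_delta_expand]
    have hdiag : (∑ i, ((∑ k, lam i i k k) + Zw y i i)) = a0inv lam + b0inv y := by
      rw [Finset.sum_add_distrib]; rfl
    rw [hdiag]
  have hMsq : (∑ i, ∑ j, ((∑ k, lam i j k k) + Zw y i j)^2)
      = (∑ m, ∑ n, (∑ k, lam m n k k)^2)
        + 2*(∑ i, ∑ m, Zw y i m * (∑ j, lam i m j j))
        + (∑ i, ∑ j, (Zw y i j)^2) := by
    rw [Finset.sum_congr rfl fun i _ => Finset.sum_congr rfl fun j _ => (show
      ((∑ k, lam i j k k) + Zw y i j)^2 = (∑ k, lam i j k k)^2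
        + 2*(Zw y i j * (∑ k, lam i j k k)) + (Zw y i j)^2 from by ring)]
    simp only [Finset.sum_add_distrib, ← Finset.mul_sum]
  have hZZ : (∑ m, ∑ n, (∑ k, lam m n k k)^2)
        + 2*(∑ i, ∑ m, Zw y i m * (∑ j, lam i m j j))
        + (∑ i, ∑ j, (Zw y i j)^2)
      = b2inv lam y + (a0inv lam + b0inv y)^2 / (Ns:ℝ) := by
    rw [hb2, hMsq]
    field_simp
    ring
  have hcs := cs_final lam hsym
  have hb2nn : 0 ≤ b2inv lam y :=
    Finset.sum_nonneg fun i _ => Finset.sum_nonneg fun j _ => sq_nonneg _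
  have ha0 : a0inv lam = ∑ i, ∑ j, lam i i j j := rfl
  have hb0 : b0inv y = ∑ i, Zw y i i := rfl
  rw [← ha0] at E1 hcs
  rw [← hb0] at E2
  have hSL : 6*(a0inv lam)^2/((Ns:ℝ)*((Ns:ℝ)+2))
      ≤ 2*(∑ i, ∑ j, ∑ k, ∑ l, (lam i j k l)^2) := by
    rw [div_le_iff₀ (by positivity)]
    nlinarith [hcs]
  rw [Yinv_eq]
  have harith : (a0inv lam + b0inv y)^2/(Ns:ℝ)
      - (1/(Ns:ℝ))*((((Ns:ℝ)+8)/((Ns:ℝ)+2))*(a0inv lam)^2 + (b0inv y)^2)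
      - (2/(Ns:ℝ))*(a0inv lam * b0inv y)
      = -(6*(a0inv lam)^2/((Ns:ℝ)*((Ns:ℝ)+2))) := by
    field_simp
    ring
  linarith [E1, E2, hZZ, harith, hb2nn, hSL]
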